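/- Let f ∈ SO with f ≥ 1 and suppose φ : SO → ℝ is a lattice-linear homomorphism with φ(f) = 1 and φ(1) = 0. Then there exists a free (non-principal) ultrafilter F on ℕ such that for every g ∈ SO, φ(g) equals the limit of g(n)/f(n) along F; in particular g(n)/f(n) converges along F for every g ∈ SO. -/

import Mathlib

open Filter Metric Set

noncomputable section

/-- A continuous function on the half-line `[0,∞)` (modeled as `ℝ≥0`) is
slowly oscillating if for every `R > 0` and `ε > 0` there is `M > 0` with
`diam f([x, x+R]) < ε` for all `x > M`. -/
def SO (f : NNReal → ℝ) : Prop :=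
  Continuous f ∧ ∀ R : NNReal, 0 < R → ∀ ε : ℝ, 0 < ε → ∃ M : NNReal, 0 < M ∧
    ∀ x : NNReal, M < x → Metric.diam (f '' Set.Icc x (x + R)) < ε

/-- A lattice-linear homomorphism of the vector lattice `SO`, encoded as a
function on all of `NNReal → ℝ` whose homomorphism properties are required on
slowly oscillating functions. -/
def IsHom (φ : (NNReal → ℝ) → ℝ) : Prop :=
  (∀ f g : NNReal → ℝ, SO f → SO g → ∀ c d : ℝ,
      φ (c • f + d • g) = c * φ f + d * φ g) ∧
  (∀ f g : NNReal → ℝ, SO f → SO g → φ (f ⊔ g) = φ f ⊔ φ g) ∧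
  (∀ f g : NNReal → ℝ, SO f → SO g → φ (f ⊓ g) = φ f ⊓ φ g)

/-- Oscillation reformulation of `SO`. -/
lemma so_iff' (f : NNReal → ℝ) : SO f ↔ Continuous f ∧
    ∀ R : NNReal, 0 < R → ∀ ε : ℝ, 0 < ε → ∃ M : NNReal,
      ∀ x y : NNReal, M < x → x ≤ y → y ≤ x + R → |f y - f x| < ε := by
  constructor
  · rintro ⟨hc, h⟩
    refine ⟨hc, fun R hR ε hε => ?_⟩
    obtain ⟨M, _, hM⟩ := h R hR ε hε
    refine ⟨M, fun x y hx hxy hyx => ?_⟩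
    have hb : Bornology.IsBounded (f '' Set.Icc x (x + R)) :=
      (isCompact_Icc.image hc).isBounded
    calc |f y - f x| = dist (f y) (f x) := (Real.dist_eq _ _).symm
      _ ≤ diam (f '' Set.Icc x (x + R)) :=
          dist_le_diam_of_mem hb ⟨y, ⟨hxy, hyx⟩, rfl⟩ ⟨x, ⟨le_rfl, le_self_add⟩, rfl⟩
      _ < ε := hM x hx
  · rintro ⟨hc, h⟩
    refine ⟨hc, fun R hR ε hε => ?_⟩
    obtain ⟨M, hM⟩ := h R hR (ε / 4) (by positivity)
    refine ⟨M + 1, lt_of_lt_of_le zero_lt_one le_add_self, fun x hx => ?_⟩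
    have hMx : M < x := lt_trans (lt_add_of_pos_right M zero_lt_one) hx
    have hd : diam (f '' Set.Icc x (x + R)) ≤ ε / 2 := by
      apply diam_le_of_forall_dist_le (by positivity)
      rintro _ ⟨a, ha, rfl⟩ _ ⟨b, hb, rfl⟩
      have h1 := hM x a hMx ha.1 ha.2
      have h2 := hM x b hMx hb.1 hb.2
      rw [Real.dist_eq]
      have h1' := abs_lt.1 h1
      have h2' := abs_lt.1 h2
      rw [abs_le]
      constructor <;> [linarith [h1'.1, h2'.2]; linarith [h1'.2, h2'.1]]
    linarith
lemma so_const (c : ℝ) : SO (fun _ => c) := by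
  rw [so_iff']
  exact ⟨continuous_const, fun R _ ε hε => ⟨1, fun x y _ _ _ => by simpa using hε⟩⟩

lemma so_one : SO (1 : NNReal → ℝ) := so_const 1

lemma SO.smul' {g : NNReal → ℝ} (hg : SO g) (c : ℝ) : SO (fun x => c * g x) := by
  rw [so_iff'] at hg ⊢
  refine ⟨continuous_const.mul hg.1, fun R hR ε hε => ?_⟩
  obtain ⟨M, hM⟩ := hg.2 R hR (ε / (|c| + 1)) (by positivity)
  refine ⟨M, fun x y hx hxy hyx => ?_⟩
  have h := hM x y hx hxy hyx
  have hc : |c| < |c| + 1 := lt_add_one _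
  calc |c * g y - c * g x| = |c| * |g y - g x| := by rw [← abs_mul]; ring_nf
    _ ≤ (|c| + 1) * |g y - g x| := by
        apply mul_le_mul_of_nonneg_right (le_of_lt hc) (abs_nonneg _)
    _ < (|c| + 1) * (ε / (|c| + 1)) := by
        apply mul_lt_mul_of_pos_left h (by positivity)
    _ = ε := by field_simp

lemma SO.add' {g h : NNReal → ℝ} (hg : SO g) (hh : SO h) : SO (fun x => g x + h x) := by
  rw [so_iff'] at hg hh ⊢
  refine ⟨hg.1.add hh.1, fun R hR ε hε => ?_⟩
  obtain ⟨M₁, hM₁⟩ := hg.2 R hR (ε / 2) (by positivity)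
  obtain ⟨M₂, hM₂⟩ := hh.2 R hR (ε / 2) (by positivity)
  refine ⟨max M₁ M₂, fun x y hx hxy hyx => ?_⟩
  have h1 := hM₁ x y (lt_of_le_of_lt (le_max_left _ _) hx) hxy hyx
  have h2 := hM₂ x y (lt_of_le_of_lt (le_max_right _ _) hx) hxy hyx
  calc |g y + h y - (g x + h x)| = |(g y - g x) + (h y - h x)| := by ring_nf
    _ ≤ |g y - g x| + |h y - h x| := abs_add_le _ _
    _ < ε / 2 + ε / 2 := add_lt_add h1 h2
    _ = ε := by ring

lemma SO.sup' {g h : NNReal → ℝ} (hg : SO g) (hh : SO h) : SO (fun x => max (g x) (h x)) := by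
  rw [so_iff'] at hg hh ⊢
  refine ⟨hg.1.max hh.1, fun R hR ε hε => ?_⟩
  obtain ⟨M₁, hM₁⟩ := hg.2 R hR ε hε
  obtain ⟨M₂, hM₂⟩ := hh.2 R hR ε hε
  refine ⟨max M₁ M₂, fun x y hx hxy hyx => ?_⟩
  have h1 := hM₁ x y (lt_of_le_of_lt (le_max_left _ _) hx) hxy hyx
  have h2 := hM₂ x y (lt_of_le_of_lt (le_max_right _ _) hx) hxy hyx
  calc |max (g y) (h y) - max (g x) (h x)| ≤ max |g y - g x| |h y - h x| :=
        abs_max_sub_max_le_max _ _ _ _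
    _ < ε := max_lt h1 h2

lemma SO.neg' {g : NNReal → ℝ} (hg : SO g) : SO (fun x => -g x) := by
  have := hg.smul' (-1)
  simpa [neg_one_mul] using this

lemma SO.abs' {g : NNReal → ℝ} (hg : SO g) : SO (fun x => |g x|) := by
  have := hg.sup' hg.neg'
  simpa [← abs_eq_max_neg] using this

lemma SO.inf' {g h : NNReal → ℝ} (hg : SO g) (hh : SO h) : SO (fun x => min (g x) (h x)) := by
  have := (hg.neg'.sup' hh.neg').neg'
  simpa [max_neg_neg] using this

lemma so_eventually_zero {u : NNReal → ℝ} {M₀ : NNReal} (hc : Continuous u)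
    (h : ∀ x, M₀ ≤ x → u x = 0) : SO u := by
  rw [so_iff']
  refine ⟨hc, fun R hR ε hε => ⟨M₀, fun x y hx hxy _ => ?_⟩⟩
  rw [h x hx.le, h y (le_trans hx.le hxy), sub_zero, abs_zero]
  exact hε

section phi

variable {φ : (NNReal → ℝ) → ℝ} (hφ : IsHom φ)

lemma phi_smul (hφ : IsHom φ) {g : NNReal → ℝ} (hg : SO g) (c : ℝ) :
    φ (fun x => c * g x) = c * φ g := by
  have h := hφ.1 g g hg hg c 0
  have e : c • g + (0 : ℝ) • g = fun x => c * g x := by funext x; simp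
  rw [e] at h
  rw [h]; ring

lemma phi_const (hφ : IsHom φ) (hφ1 : φ 1 = 0) (c : ℝ) : φ (fun _ => c) = 0 := by
  have h := phi_smul hφ so_one c
  have e : (fun x : NNReal => c * (1 : NNReal → ℝ) x) = fun _ => c := by funext x; simp
  rw [e] at h
  rw [h, hφ1, mul_zero]

lemma phi_mono (hφ : IsHom φ) {g h : NNReal → ℝ} (hg : SO g) (hh : SO h)
    (hle : ∀ x, g x ≤ h x) : φ g ≤ φ h := by
  have h2 := hφ.2.1 g h hg hh
  have e : g ⊔ h = h := funext fun x => max_eq_right (hle x)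
  rw [e] at h2
  calc φ g ≤ φ g ⊔ φ h := le_sup_left
    _ = φ h := h2.symm

lemma phi_abs (hφ : IsHom φ) {g : NNReal → ℝ} (hg : SO g) :
    φ (fun x => |g x|) = |φ g| := by
  have h := hφ.2.1 g (fun x => -g x) hg hg.neg'
  have e : g ⊔ (fun x => -g x) = fun x => |g x| := by
    funext x
    simp [Pi.sup_apply, abs_eq_max_neg]
  rw [e] at h
  have hn : φ (fun x => -g x) = -φ g := by
    have := phi_smul hφ hg (-1)
    simp only [neg_one_mul] at this
    linarith [this]
  rw [h, hn, abs_eq_max_neg]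

end phi

/-- The key lemma: a nonnegative slowly oscillating function killed by `φ`
must dip below `f` at arbitrarily large integers. -/
lemma keyK (f : NNReal → ℝ) (hf : SO f) (hf1 : ∀ x, 1 ≤ f x)
    (φ : (NNReal → ℝ) → ℝ) (hφ : IsHom φ) (hφf : φ f = 1) (hφ1 : φ 1 = 0)
    {G : NNReal → ℝ} (hG : SO G) (hG0 : ∀ x, 0 ≤ G x) (hGφ : φ G = 0) (N : ℕ) :
    ∃ n : ℕ, N < n ∧ G n < f n := by
  by_contra hcon
  push_neg at hcon
  -- hcon : ∀ n : ℕ, N < n → f n ≤ G n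
  obtain ⟨hfc, hf'⟩ := (so_iff' f).1 hf
  obtain ⟨hGc, hG'⟩ := (so_iff' G).1 hG
  obtain ⟨Mf, hMf⟩ := hf' 1 zero_lt_one (1/4) (by norm_num)
  obtain ⟨MG, hMG⟩ := hG' 1 zero_lt_one (1/4) (by norm_num)
  set M' : ℕ := N + ⌈(Mf ⊔ MG : NNReal)⌉₊ + 1 with hM'
  -- Claim: beyond M', G ≥ f/2.
  have key : ∀ x : NNReal, (M' : NNReal) ≤ x → (1/2) * f x ≤ G x := by
    intro x hx
    set n : ℕ := ⌊x⌋₊ with hn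
    have hnx : (n : NNReal) ≤ x := Nat.floor_le zero_le
    have hxn : x ≤ (n : NNReal) + 1 := le_of_lt (Nat.lt_floor_add_one x)
    have hMn : M' ≤ n := Nat.le_floor hx
    have hNn : N < n := by omega
    have hcMG : (Mf ⊔ MG : NNReal) < (n : NNReal) := by
      calc (Mf ⊔ MG : NNReal) < ⌈(Mf ⊔ MG : NNReal)⌉₊ + 1 := by
            exact lt_of_le_of_lt (Nat.le_ceil _) (lt_add_of_pos_right _ zero_lt_one)
        _ ≤ (M' : NNReal) := by
            have hle : ⌈(Mf ⊔ MG : NNReal)⌉₊ + 1 ≤ M' := by omega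
            exact_mod_cast Nat.cast_le.2 hle
        _ ≤ (n : NNReal) := by exact_mod_cast Nat.cast_le.2 hMn
    have hMfn : Mf < (n : NNReal) := lt_of_le_of_lt le_sup_left hcMG
    have hMGn : MG < (n : NNReal) := lt_of_le_of_lt le_sup_right hcMG
    have h1 := hMf (n : NNReal) x hMfn hnx hxn
    have h2 := hMG (n : NNReal) x hMGn hnx hxn
    have h1' := abs_lt.1 h1
    have h2' := abs_lt.1 h2
    have h3 : f (n : NNReal) ≤ G (n : NNReal) := hcon n hNn
    have h4 : (1 : ℝ) ≤ f (n : NNReal) := hf1 _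
    linarith [h1'.1, h1'.2, h2'.1, h2'.2]
  -- Define v = min G (f/2) and u = v - f/2.
  set v : NNReal → ℝ := fun x => min (G x) ((1/2) * f x) with hv
  set u : NNReal → ℝ := fun x => v x - (1/2) * f x with hu
  have huc : Continuous u := ((hGc.min (continuous_const.mul hfc)).sub
    (continuous_const.mul hfc))
  have huz : ∀ x : NNReal, (M' : NNReal) ≤ x → u x = 0 := by
    intro x hx
    simp only [hu, hv]
    rw [min_eq_right (key x hx)]
    ring
  have hSOu : SO u := so_eventually_zero huc huz
  have hSOhalf : SO (fun x => (1/2) * f x) := hf.smul' (1/2)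
  have hSOv : SO v := hG.inf' hSOhalf
  -- φ u = 0 : u is nonpositive and bounded below by a constant
  have hu0 : ∀ x, u x ≤ 0 := by
    intro x
    simp only [hu, hv]
    have := min_le_right (G x) ((1/2) * f x)
    linarith
  obtain ⟨z, _, hzmin⟩ := IsCompact.exists_isMinOn (isCompact_Icc : IsCompact (Icc 0 (M' : NNReal)))
      ⟨0, le_rfl, zero_le⟩ huc.continuousOn
  have hlb : ∀ x, min (u z) 0 ≤ u x := by
    intro x
    rcases le_total x (M' : NNReal) with hx | hx
    · exact le_trans (min_le_left _ _) (hzmin ⟨zero_le, hx⟩)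
    · rw [huz x hx]; exact min_le_right _ _
  have hφu_le : φ u ≤ 0 := by
    have := phi_mono hφ hSOu (so_const 0) hu0
    rwa [phi_const hφ hφ1 0] at this
  have hφu_ge : 0 ≤ φ u := by
    have := phi_mono hφ (so_const (min (u z) 0)) hSOu hlb
    rwa [phi_const hφ hφ1 _] at this
  have hφu : φ u = 0 := le_antisymm hφu_le hφu_ge
  -- φ v = 1/2 via linearity
  have hveq : ((1:ℝ)/2) • f + (1:ℝ) • u = v := by
    funext x
    simp [hu, smul_eq_mul]
  have hlin := hφ.1 f u hf hSOu (1/2) 1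
  rw [hveq] at hlin
  have hφv1 : φ v = 1/2 := by rw [hlin, hφf, hφu]; ring
  -- φ v = 0 via lattice
  have hveq2 : G ⊓ (fun x => (1/2) * f x) = v := by
    funext x
    simp [hv, Pi.inf_apply]
  have hmeet := hφ.2.2 G (fun x => (1/2) * f x) hG hSOhalf
  rw [hveq2] at hmeet
  have hφhalf : φ (fun x => (1/2) * f x) = 1/2 := by
    rw [phi_smul hφ hf (1/2), hφf, mul_one]
  have hφv0 : φ v = 0 := by
    rw [hmeet, hGφ, hφhalf]
    simp
  rw [hφv1] at hφv0
  norm_num at hφv0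

theorem stmt_18 (f : NNReal → ℝ) (hf : SO f) (hf1 : ∀ x, 1 ≤ f x)
    (φ : (NNReal → ℝ) → ℝ) (hφ : IsHom φ) (hφf : φ f = 1) (hφ1 : φ 1 = 0) :
    ∃ F : Ultrafilter ℕ, (∀ n : ℕ, F ≠ pure n) ∧
      ∀ g : NNReal → ℝ, SO g →
        Filter.Tendsto (fun n : ℕ => g n / f n) (F : Filter ℕ) (nhds (φ g)) := by
  classical
  set C : (NNReal → ℝ) → Prop := fun G => SO G ∧ (∀ x, 0 ≤ G x) ∧ φ G = 0 with hC
  set B : (NNReal → ℝ) → ℕ → Set ℕ := fun G N => {n : ℕ | N < n ∧ G n < f n} with hB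
  have hC0 : C (fun _ => 0) := ⟨so_const 0, fun _ => le_rfl, phi_const hφ hφ1 0⟩
  -- the index type
  let ι := {p : (NNReal → ℝ) × ℕ // C p.1}
  haveI : Nonempty ι := ⟨⟨((fun _ => 0), 0), hC0⟩⟩
  set F₀ : Filter ℕ := ⨅ i : ι, 𝓟 (B i.1.1 i.1.2) with hF₀
  have hCsup : ∀ {G₁ G₂ : NNReal → ℝ}, C G₁ → C G₂ → C (fun x => max (G₁ x) (G₂ x)) := by
    rintro G₁ G₂ ⟨h₁, h₁0, h₁φ⟩ ⟨h₂, h₂0, h₂φ⟩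
    refine ⟨h₁.sup' h₂, fun x => le_trans (h₁0 x) (le_max_left _ _), ?_⟩
    have h := hφ.2.1 G₁ G₂ h₁ h₂
    have e : G₁ ⊔ G₂ = fun x => max (G₁ x) (G₂ x) := by
      funext x; simp [Pi.sup_apply]
    rw [e] at h
    rw [h, h₁φ, h₂φ]
    simp
  have hdir : Directed (· ≥ ·) (fun i : ι => 𝓟 (B i.1.1 i.1.2)) := by
    rintro ⟨⟨G₁, N₁⟩, h₁⟩ ⟨⟨G₂, N₂⟩, h₂⟩
    refine ⟨⟨((fun x => max (G₁ x) (G₂ x)), max N₁ N₂), hCsup h₁ h₂⟩, ?_, ?_⟩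
    · apply principal_mono.2
      rintro n ⟨hn1, hn2⟩
      exact ⟨lt_of_le_of_lt (le_max_left _ _) hn1, lt_of_le_of_lt (le_max_left _ _) hn2⟩
    · apply principal_mono.2
      rintro n ⟨hn1, hn2⟩
      exact ⟨lt_of_le_of_lt (le_max_right _ _) hn1, lt_of_le_of_lt (le_max_right _ _) hn2⟩
  haveI hne : F₀.NeBot := by
    apply Filter.iInf_neBot_of_directed hdir
    rintro ⟨⟨G, N⟩, hCG⟩
    rw [principal_neBot_iff]
    obtain ⟨n, hn1, hn2⟩ := keyK f hf hf1 φ hφ hφf hφ1 hCG.1 hCG.2.1 hCG.2.2 N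
    exact ⟨n, hn1, hn2⟩
  have hmem : ∀ G N, C G → B G N ∈ F₀ := by
    intro G N hCG
    exact mem_iInf_of_mem ⟨(G, N), hCG⟩ (mem_principal_self _)
  refine ⟨Ultrafilter.of F₀, ?_, ?_⟩
  · intro n hn
    have h1 : B (fun _ => 0) n ∈ (Ultrafilter.of F₀ : Filter ℕ) :=
      Ultrafilter.of_le F₀ (hmem _ n hC0)
    rw [hn] at h1
    have : n ∈ B (fun _ => 0) n := h1
    exact lt_irrefl n this.1
  · intro g hg
    rw [Metric.tendsto_nhds]
    intro ε hε
    -- the witness function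
    set w : NNReal → ℝ := fun x => ε⁻¹ * |g x - φ g * f x| with hw
    have hinner : SO (fun x => g x - φ g * f x) := by
      have := hg.add' (hf.smul' (-φ g))
      simp only [neg_mul, ← sub_eq_add_neg] at this
      exact this
    have hSOw : SO w := (hinner.abs').smul' ε⁻¹
    have hφinner : φ (fun x => g x - φ g * f x) = 0 := by
      have h := hφ.1 g f hg hf 1 (-φ g)
      have e : (1:ℝ) • g + (-φ g) • f = fun x => g x - φ g * f x := by
        funext x; simp [smul_eq_mul]; ring
      rw [e] at h
      rw [h, hφf]; ring
    have hCw : C w := by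
      refine ⟨hSOw, fun x => by positivity, ?_⟩
      rw [phi_smul hφ hinner.abs' ε⁻¹, phi_abs hφ hinner, hφinner, abs_zero, mul_zero]
    have hsub : B w 0 ⊆ {n : ℕ | dist (g n / f n) (φ g) < ε} := by
      rintro n ⟨_, hn⟩
      have hfn : (0:ℝ) < f n := lt_of_lt_of_le zero_lt_one (hf1 _)
      have h1 : |g n - φ g * f n| < ε * f n := by
        have := hn
        rw [hw] at this
        calc |g n - φ g * f n| = ε * (ε⁻¹ * |g n - φ g * f n|) := by
              field_simp
          _ < ε * f n := by exact mul_lt_mul_of_pos_left this hε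
      simp only [mem_setOf_eq, Real.dist_eq]
      rw [div_sub' (ne_of_gt hfn), abs_div, abs_of_pos hfn, div_lt_iff₀ hfn]
      have he : g (n : NNReal) - f (n : NNReal) * φ g = g (n : NNReal) - φ g * f (n : NNReal) := by ring
      rw [he]
      exact h1
    exact mem_of_superset (Ultrafilter.of_le F₀ (hmem w 0 hCw)) hsub
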